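/- arXiv:1903.03170 — 3 statements merged into one kernel-verified Lean document; each statement's English description precedes it below -/
import Mathlib

section
/- Let d be a strictly increasing function ℕ → ℕ and x, y infinite co-infinite subsets of ℕ defined from index sets I, J ⊆ ℕ with |i - j| > 3 for all i ∈ I, j ∈ J, via x^c := ⋃_{n∈I} [d̃(n), d̃(n+2)) and y^c := ⋃_{n∈J} [d̃(n), d̃(n+2)), where d̃ is the iterate function of d. Then for all sufficiently large k, d(k) ≤ max(x^c(k), y^c(k)), where x^c(k) denotes the k-th smallest element of x^c. -/
/-- The 1-indexed increasing enumeration of a subset of ℕ: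
`enum x n` is the `n`-th smallest element of `x`. -/
noncomputable def enum (x : Set ℕ) (n : ℕ) : ℕ := Nat.nth (· ∈ x) (n - 1)

/-- The iterate `f̃` of `f`: `f̃(1) = f(1)` and `f̃(n+1) = f(f̃(n))`. -/
def tilde (f : ℕ → ℕ) : ℕ → ℕ
  | 0 => 1
  | n + 1 => f (tilde f n)



section aux
variable {d : ℕ → ℕ} (hd : StrictMono d) (hd1 : 1 < d 1)

include hd hd1 in
lemma lt_apply_of_pos {m : ℕ} (hm : 1 ≤ m) : m < d m := by
  induction m with
  | zero => omega
  | succ n ih =>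
    rcases Nat.eq_zero_or_pos n with h | h
    · subst h; exact hd1
    · have := hd (show n < n + 1 by omega)
      have := ih h
      omega

include hd hd1 in
lemma tilde_ge : ∀ n, n + 1 ≤ tilde d n := by
  intro n
  induction n with
  | zero => simp [tilde]
  | succ n ih =>
    have h1 : 1 ≤ tilde d n := by omega
    have := lt_apply_of_pos hd hd1 h1
    simpa [tilde] using by omega

include hd hd1 in
lemma tilde_mono : StrictMono (tilde d) := by
  apply strictMono_nat_of_lt_succ
  intro n
  have h1 : 1 ≤ tilde d n := by have := tilde_ge hd hd1 n; omega
  simpa [tilde] using lt_apply_of_pos hd hd1 h1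

end aux

lemma enum_mem {z : Set ℕ} (hz : z.Infinite) (k : ℕ) : enum z k ∈ z :=
  Nat.nth_mem_of_infinite hz (k - 1)

lemma enum_ge {z : Set ℕ} (hz : z.Infinite) (h0 : 0 ∉ z) {k : ℕ} (hk : 1 ≤ k) :
    k ≤ enum z k := by
  have hsm : StrictMono (Nat.nth (· ∈ z)) := Nat.nth_strictMono hz
  have key : ∀ i, i + 1 ≤ Nat.nth (· ∈ z) i := by
    intro i
    induction i with
    | zero =>
      have hm : Nat.nth (· ∈ z) 0 ∈ z := Nat.nth_mem_of_infinite hz 0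
      by_contra h
      have : Nat.nth (· ∈ z) 0 = 0 := by omega
      rw [this] at hm
      exact h0 hm
    | succ n ih =>
      have := hsm (show n < n + 1 by omega)
      omega
  have := key (k - 1)
  unfold enum
  omega

section main
variable {d : ℕ → ℕ} (hd : StrictMono d) (hd1 : 1 < d 1)

include hd hd1 in
lemma z_infinite {S : Set ℕ} (hS : S.Infinite) :
    (⋃ n ∈ S, Set.Ico (tilde d n) (tilde d (n + 2))).Infinite := by
  refine Set.Infinite.mono ?_ (hS.image ((tilde_mono hd hd1).injective.injOn))
  rintro x ⟨n, hn, rfl⟩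
  exact Set.mem_biUnion hn ⟨le_refl _, tilde_mono hd hd1 (by omega)⟩

include hd hd1 in
lemma zero_not_mem {S : Set ℕ} :
    0 ∉ (⋃ n ∈ S, Set.Ico (tilde d n) (tilde d (n + 2))) := by
  simp only [Set.mem_iUnion, Set.mem_Ico, not_exists]
  intro n _ ⟨h1, _⟩
  have := tilde_ge hd hd1 n
  omega

include hd hd1 in
lemma key_lemma {S : Set ℕ} (hS : S.Infinite) {n k : ℕ}
    (hnk : tilde d n ≤ k) (hkn : k < tilde d (n + 1))
    (hdisj : ∀ m ∈ S, ¬ (tilde d m < tilde d (n + 2) ∧ tilde d n < tilde d (m + 2))) :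
    d k ≤ enum (⋃ m ∈ S, Set.Ico (tilde d m) (tilde d (m + 2))) k := by
  set z := ⋃ m ∈ S, Set.Ico (tilde d m) (tilde d (m + 2)) with hz
  have hzi : z.Infinite := z_infinite hd hd1 hS
  have hk1 : 1 ≤ k := le_trans (tilde_ge hd hd1 n) hnk |>.trans' (by omega)
  have hge : k ≤ enum z k := enum_ge hzi (zero_not_mem hd hd1) hk1
  set e := enum z k with he
  have hmem : e ∈ z := enum_mem hzi k
  rw [hz] at hmem
  simp only [Set.mem_iUnion, Set.mem_Ico] at hmem
  obtain ⟨m, hm, h1, h2⟩ := hmem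
  have hnot := hdisj m hm
  -- enum z k ≥ t n since ≥ k ≥ t n; it's in [t m, t (m+2))
  -- if t m < t (n+2) and t n < t (m+2) contradiction, so either t (n+2) ≤ t m or t (m+2) ≤ t n
  have hdk : d k < tilde d (n + 2) := by
    have := hd hkn
    simpa [tilde] using this
  rcases not_and_or.mp hnot with h | h
  · push_neg at h
    -- t (n+2) ≤ t m ≤ enum z k
    omega
  · push_neg at h
    -- t (m+2) ≤ t n ≤ k ≤ enum z k < t (m+2) contradiction
    omega

include hd hd1 in
lemma exists_level {k : ℕ} (hk : 1 ≤ k) :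
    ∃ n, tilde d n ≤ k ∧ k < tilde d (n + 1) := by
  set P : ℕ → Prop := fun m => tilde d m ≤ k with hP
  have hdec : DecidablePred P := fun m => inferInstanceAs (Decidable (_ ≤ _))
  refine ⟨Nat.findGreatest P k, ?_, ?_⟩
  · exact Nat.findGreatest_spec (P := P) (n := k) (m := 0) (by omega)
      (show tilde d 0 ≤ k by simpa [tilde] using hk)
  · by_contra h
    push_neg at h
    have hle : Nat.findGreatest P k + 1 ≤ k := by
      have := tilde_ge hd hd1 (Nat.findGreatest P k + 1)
      omega
    exact Nat.findGreatest_is_greatest (P := P) (n := k)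
      (k := Nat.findGreatest P k + 1) (by omega) hle h

end main

theorem stmt6 (d : ℕ → ℕ) (hd : StrictMono d) (hd1 : 1 < d 1)
    (I J : Set ℕ) (hI : I.Infinite) (hJ : J.Infinite)
    (hsep : ∀ i ∈ I, ∀ j ∈ J, (3 : ℤ) < |(i : ℤ) - (j : ℤ)|)
    (xc yc : Set ℕ)
    (hxc : xc = ⋃ n ∈ I, Set.Ico (tilde d n) (tilde d (n + 2)))
    (hyc : yc = ⋃ n ∈ J, Set.Ico (tilde d n) (tilde d (n + 2))) :
    ∃ N : ℕ, ∀ k ≥ N, d k ≤ max (enum xc k) (enum yc k) := by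
  refine ⟨1, fun k hk => ?_⟩
  obtain ⟨n, hn1, hn2⟩ := exists_level hd hd1 hk
  have tm := tilde_mono hd hd1
  by_cases hx : ∀ m ∈ I, ¬ (tilde d m < tilde d (n + 2) ∧ tilde d n < tilde d (m + 2))
  · have h := key_lemma hd hd1 hI hn1 hn2 hx
    rw [hxc]
    exact le_max_of_le_left h
  · push_neg at hx
    obtain ⟨i, hi, hi1, hi2⟩ := hx
    have hJdisj : ∀ m ∈ J, ¬ (tilde d m < tilde d (n + 2) ∧ tilde d n < tilde d (m + 2)) := by
      rintro j hj ⟨hj1, hj2⟩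
      have hia : i < n + 2 := tm.lt_iff_lt.mp hi1
      have hib : n < i + 2 := tm.lt_iff_lt.mp hi2
      have hja : j < n + 2 := tm.lt_iff_lt.mp hj1
      have hjb : n < j + 2 := tm.lt_iff_lt.mp hj2
      have hs := hsep i hi j hj
      rw [lt_abs] at hs
      omega
    have h := key_lemma hd hd1 hJ hn1 hn2 hJdisj
    rw [hyc]
    exact le_max_of_le_right h
end

section
/- Let Z be a set of functions ℕ → ℕ with |Z| < min(𝔡, 𝔯), and let d : ℕ → ℕ be strictly increasing. Then there exist infinite co-infinite subsets x, y of ℕ such that for every z ∈ Z, z(n) < x(n) for infinitely many n and z(n) < y(n) for infinitely many n (comparing increasing enumerations), and d(k) ≤ max(x^c(k), y^c(k)) for all but finitely many k. -/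
/-- A set of functions is dominating if every function is eventually dominated
by a member of it. -/
def IsDominating (D : Set (ℕ → ℕ)) : Prop :=
  ∀ f : ℕ → ℕ, ∃ d ∈ D, ∀ᶠ n in Filter.atTop, f n ≤ d n

/-- The dominating number 𝔡. -/
noncomputable def domNumber : Cardinal :=
  sInf {c : Cardinal | ∃ D : Set (ℕ → ℕ), IsDominating D ∧ Cardinal.mk D = c}

/-- `r` reaps the family `A` of infinite sets: it splits each member into two
infinite pieces. -/
def Reaps (r : Set ℕ) (A : Set (Set ℕ)) : Prop :=
  ∀ a ∈ A, (a ∩ r).Infinite ∧ (a \ r).Infinite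

/-- The reaping number 𝔯. -/
noncomputable def reapNumber : Cardinal :=
  sInf {c : Cardinal | ∃ A : Set (Set ℕ), (∀ a ∈ A, a.Infinite) ∧
    (¬ ∃ r : Set ℕ, r.Infinite ∧ Reaps r A) ∧ Cardinal.mk A = c}

open Set Filter

/-!
From a function `G` exceeding each `z ∈ Z` infinitely often, build thresholds
`a₀ < g₀ < a₁ < g₁ < ⋯` with `g_j = d (a_j + 1)` and `a_{j+1} > G` on `[0, g_j]`. For `T ⊆ ℕ` let
`U T` be the union of the windows `[g_j, a_{j+1})` for `j ∈ T` and `[a_{j+1}, g_{j+1})` for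
`j, j + 1 ∈ T`; the sets are `x = (U σ)ᶜ` and `y = (U σᶜ)ᶜ`.

Domination holds for any `σ`: if `g_j ≤ d k < g_{j+1}`, one of `σ`, `σᶜ` omits `j`, and then the
corresponding `U` has at most `a_j < k` points below `d k`.

For `z ∈ Z` there are infinitely many `j` with `z n < a_{j+2}` for some `n > g_j`. If `j, j + 1 ∈ σ`
then `[g_j, a_{j+2}) ⊆ U σ`, so `x` has at most `g_j < n` points up to `z n`, i.e. `z n < x(n)`.
Thus `σ` must contain, and also omit, infinitely many such pairs `j, j + 1` for every `z`. Since
`|Z| < 𝔡`, the blocks cut out by the orbit of a suitable `H` contain such a pair for infinitely many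
block indices, and since `|Z| < 𝔯` a single set `ρ` of block indices splits all these index sets;
`σ` is the union of the blocks indexed by `ρ`.
-/

theorem StrictMono.exists_le_lt_succ {f : ℕ → ℕ} (hf : StrictMono f) {x : ℕ} (hx : f 0 ≤ x) :
    ∃ j, f j ≤ x ∧ x < f (j + 1) := by
  have h : x ∈ ⋃ j, Ico (f j) (f (Order.succ j)) := by
    rw [iUnion_Ico_map_succ_eq_Ici (fun j => hf.monotone (Nat.zero_le j))
      hf.not_bddAbove_range_of_wellFoundedLT]
    exact hx
  simpa using h

lemma count_le_of_forall_lt {p : ℕ → Prop} [DecidablePred p] {M B : ℕ}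
    (h : ∀ w < M, p w → w < B) : Nat.count p M ≤ B := by
  by_contra! hB
  obtain ⟨w, hw, hpw⟩ := Nat.exists_of_count_lt_count ((Nat.count_le p).trans_lt hB)
  exact (h w hw.2 hpw).not_ge hw.1

lemma le_enum_of_forall_lt {s : Set ℕ} (hs : s.Infinite) {M B k : ℕ}
    (h : ∀ w < M, w ∈ s → w < B) (hB : B ≤ k - 1) : M ≤ enum s k := by
  classical
  exact (Nat.count_le_iff_le_nth (p := (· ∈ s)) hs).1 ((count_le_of_forall_lt h).trans hB)

lemma domNumber_le_mk {D : Set (ℕ → ℕ)} (hD : IsDominating D) : domNumber ≤ Cardinal.mk D :=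
  csInf_le' ⟨D, hD, rfl⟩

lemma reapNumber_le_mk {A : Set (Set ℕ)} (hA : ∀ a ∈ A, a.Infinite)
    (hr : ¬ ∃ r : Set ℕ, r.Infinite ∧ Reaps r A) : reapNumber ≤ Cardinal.mk A :=
  csInf_le' ⟨A, hA, hr, rfl⟩

lemma exists_strictMono_frequently_lt {ι : Type} (f : ι → ℕ → ℕ)
    (hf : Cardinal.mk ι < domNumber) :
    ∃ g : ℕ → ℕ, StrictMono g ∧ ∀ i, ∃ᶠ n in atTop, f i n < g n := by
  obtain ⟨g₀, hg₀⟩ : ∃ g₀ : ℕ → ℕ, ∀ i, ∃ᶠ n in atTop, f i n < g₀ n := by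
    by_contra! h
    refine (domNumber_le_mk (D := range f) fun g => ?_).not_gt (Cardinal.mk_range_le.trans_lt hf)
    obtain ⟨i, hi⟩ := h g
    exact ⟨f i, mem_range_self i, hi⟩
  refine ⟨fun n => ∑ i ∈ Finset.range (n + 1), (g₀ i + 1),
    strictMono_nat_of_lt_succ fun n => ?_, fun i => (hg₀ i).mono fun n hn => ?_⟩
  · rw [Finset.sum_range_succ _ (n + 1)]
    omega
  · calc f i n < g₀ n + 1 := by omega
      _ ≤ _ := Finset.single_le_sum (f := fun i => g₀ i + 1) (fun i _ => Nat.zero_le _)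
        (Finset.self_mem_range_succ n)

lemma exists_reaps {ι : Type} (A : ι → Set ℕ) (hA : ∀ i, (A i).Infinite)
    (hr : Cardinal.mk ι < reapNumber) :
    ∃ r : Set ℕ, r.Infinite ∧ rᶜ.Infinite ∧ ∀ i, (A i ∩ r).Infinite ∧ (A i \ r).Infinite := by
  obtain ⟨r, hr, hrA⟩ : ∃ r : Set ℕ, r.Infinite ∧ Reaps r (range A) := by
    by_contra h
    exact (reapNumber_le_mk (forall_mem_range.2 hA) h).not_gt
      (Cardinal.mk_range_le.trans_lt hr)
  rw [Reaps, forall_mem_range] at hrA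
  rcases isEmpty_or_nonempty ι with hι | ⟨⟨i⟩⟩
  · refine ⟨{n | Even n}, infinite_of_forall_exists_gt fun n => ⟨2 * n + 2, ⟨n + 1, by omega⟩,
      by omega⟩, infinite_of_forall_exists_gt fun n => ⟨2 * n + 1, ?_, by omega⟩, isEmptyElim⟩
    simp [parity_simps]
  · exact ⟨r, hr, (hrA i).2.mono fun _ h => h.2, hrA⟩

section Blocks

variable {v : ℕ → ℕ} {ρ b : Set ℕ}

def blockUnion (v : ℕ → ℕ) (ρ : Set ℕ) : Set ℕ := ⋃ m ∈ ρ, Ioc (v m) (v (m + 1))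

def pairBlocks (v : ℕ → ℕ) (b : Set ℕ) : Set ℕ := {m | ∃ j ∈ b, v m < j ∧ j + 1 ≤ v (m + 1)}

lemma blockUnion_compl_subset (hv : Monotone v) (ρ : Set ℕ) :
    blockUnion v ρᶜ ⊆ (blockUnion v ρ)ᶜ := by
  simp only [blockUnion, subset_def, mem_compl_iff, mem_iUnion₂]
  rintro j ⟨m, hm, hjm⟩ ⟨m', hm', hjm'⟩
  have hne : m ≠ m' := by rintro rfl; exact hm hm'
  have := hv.pairwise_disjoint_on_Ioc_succ hne
  simp only [Function.onFun, Order.succ_eq_add_one] at this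
  exact Set.disjoint_left.1 this hjm hjm'

lemma blockUnion_infinite (hv : StrictMono v) (hρ : ρ.Infinite) : (blockUnion v ρ).Infinite := by
  refine (hρ.image fun m _ m' _ h => Nat.succ_injective (hv.injective h)).mono ?_
  rintro _ ⟨m, hm, rfl⟩
  exact mem_biUnion hm ⟨hv (Nat.lt_succ_self m), le_rfl⟩

lemma infinite_pairs_of_infinite_inter (hv : StrictMono v) (h : (pairBlocks v b ∩ ρ).Infinite) :
    {j ∈ b | j ∈ blockUnion v ρ ∧ j + 1 ∈ blockUnion v ρ}.Infinite := by
  refine infinite_of_forall_exists_gt fun J => ?_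
  obtain ⟨m, ⟨⟨j, hjb, hmj, hjm⟩, hm⟩, hJm⟩ := h.exists_gt J
  have := hv.id_le m
  exact ⟨j, ⟨hjb, mem_biUnion hm ⟨hmj, by omega⟩, mem_biUnion hm ⟨by omega, hjm⟩⟩,
    by simp only [id] at this; omega⟩

def blockEnds (H : ℕ → ℕ) : ℕ → ℕ
  | 0 => 0
  | m + 1 => H (blockEnds H m) + 1

lemma blockEnds_strictMono {H : ℕ → ℕ} (hH : StrictMono H) : StrictMono (blockEnds H) :=
  strictMono_nat_of_lt_succ fun _ => Nat.lt_succ_of_le (hH.id_le _)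

/-- `Nat.nth (· ∈ b) (k + 1) < Nat.nth (· ∈ b) (k + 2)` are points of `b` above `k`; when the
second is below `H k`, one of them lies, together with its successor, in the block containing `k`
or in the next one. -/
lemma pairBlocks_infinite {H : ℕ → ℕ} (hH : StrictMono H) (hb : b.Infinite)
    (hHb : ∃ᶠ k in atTop, Nat.nth (· ∈ b) (k + 2) < H k) :
    (pairBlocks (blockEnds H) b).Infinite := by
  set v := blockEnds H
  have hv : StrictMono v := blockEnds_strictMono hH
  refine infinite_of_forall_exists_gt fun M => ?_
  obtain ⟨k, hk, hkb⟩ := frequently_atTop.1 hHb (v (M + 1))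
  obtain ⟨m, hmk, hkm⟩ := hv.exists_le_lt_succ (x := k) (Nat.zero_le k)
  have hMm : M < m := by have := hv.lt_iff_lt.1 (hk.trans_lt hkm); omega
  set j₁ := Nat.nth (· ∈ b) (k + 1)
  set j₂ := Nat.nth (· ∈ b) (k + 2)
  have hj₁ : k < j₁ := (Nat.nth_strictMono hb).id_le (k + 1)
  have hj₁₂ : j₁ < j₂ := Nat.nth_strictMono hb (Nat.lt_succ_self _)
  have hj₂ : j₂ < v (m + 2) :=
    calc j₂ < H k := hkb
      _ ≤ H (v (m + 1)) := hH.monotone hkm.le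
      _ < v (m + 2) := Nat.lt_succ_self _
  by_cases h : j₁ + 1 ≤ v (m + 1)
  · exact ⟨m, ⟨j₁, Nat.nth_mem_of_infinite hb _, by omega, h⟩, hMm⟩
  · exact ⟨m + 1, ⟨j₂, Nat.nth_mem_of_infinite hb _, by omega, hj₂⟩, by omega⟩

end Blocks

theorem exists_pairSplitting {ι : Type} (B : ι → Set ℕ) (hB : ∀ i, (B i).Infinite)
    (hd : Cardinal.mk ι < domNumber) (hr : Cardinal.mk ι < reapNumber) :
    ∃ σ : Set ℕ, σ.Infinite ∧ σᶜ.Infinite ∧ ∀ i,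
      {j ∈ B i | j ∈ σ ∧ j + 1 ∈ σ}.Infinite ∧ {j ∈ B i | j ∉ σ ∧ j + 1 ∉ σ}.Infinite := by
  obtain ⟨H, hH, hHB⟩ := exists_strictMono_frequently_lt (fun i k => Nat.nth (· ∈ B i) (k + 2)) hd
  have hv := blockEnds_strictMono hH
  have hcompl := blockUnion_compl_subset hv.monotone
  obtain ⟨ρ, hρ, hρc, hρB⟩ := exists_reaps (fun i => pairBlocks (blockEnds H) (B i))
    (fun i => pairBlocks_infinite hH (hB i) (hHB i)) hr
  refine ⟨blockUnion (blockEnds H) ρ, blockUnion_infinite hv hρ,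
    (blockUnion_infinite hv hρc).mono (hcompl ρ), fun i =>
      ⟨infinite_pairs_of_infinite_inter hv (hρB i).1, ?_⟩⟩
  exact (infinite_pairs_of_infinite_inter hv (hρB i).2).mono
    fun j hj => ⟨hj.1, hcompl ρ hj.2.1, hcompl ρ hj.2.2⟩

section ScaleUnion

variable {a g : ℕ → ℕ} {T : Set ℕ} {j : ℕ}

/-- The set `U T`: the windows `[g j, a (j + 1))` for `j ∈ T` and `[a (j + 1), g (j + 1))` for
`j, j + 1 ∈ T`. -/
def scaleUnion (a g : ℕ → ℕ) (T : Set ℕ) : Set ℕ :=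
  {w | ∃ j ∈ T, g j ≤ w ∧ (w < a (j + 1) ∨ (j + 1 ∈ T ∧ w < g (j + 1)))}

lemma Ico_subset_scaleUnion (hj : j ∈ T) (hj₁ : j + 1 ∈ T) :
    Ico (g j) (a (j + 2)) ⊆ scaleUnion a g T := by
  rintro w ⟨hjw, hwj⟩
  by_cases h₁ : w < a (j + 1)
  · exact ⟨j, hj, hjw, Or.inl h₁⟩
  by_cases h₂ : w < g (j + 1)
  · exact ⟨j, hj, hjw, Or.inr ⟨hj₁, h₂⟩⟩
  · exact ⟨j + 1, hj₁, not_lt.1 h₂, Or.inl hwj⟩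

lemma strictMono_of_le_of_lt_succ (hag : ∀ j, a j ≤ g j) (hga : ∀ j, g j < a (j + 1)) :
    StrictMono g :=
  strictMono_nat_of_lt_succ fun j => (hga j).trans_le (hag (j + 1))

lemma lt_of_mem_scaleUnion (hag : ∀ j, a j ≤ g j) (hga : ∀ j, g j < a (j + 1)) (hj : j ∉ T)
    {w : ℕ} (hw : w ∈ scaleUnion a g T) (hwj : w < g (j + 1)) : w < a j := by
  have ha : Monotone a := (strictMono_nat_of_lt_succ fun j => (hag j).trans_lt (hga j)).monotone
  have hg := strictMono_of_le_of_lt_succ hag hga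
  obtain ⟨i, hi, hiw, hw | ⟨hi₁, hw⟩⟩ := hw
  all_goals
    have hij : i ≠ j := by rintro rfl; exact hj hi
    have := hg.lt_iff_lt.1 (hiw.trans_lt hwj)
  · exact hw.trans_le (ha (by omega))
  · have hij₁ : i + 1 ≠ j := by rintro rfl; exact hj hi₁
    exact (hw.trans (hga _)).trans_le (ha (by omega))

lemma scaleUnion_infinite (hag : ∀ j, a j ≤ g j) (hga : ∀ j, g j < a (j + 1)) (hT : T.Infinite) :
    (scaleUnion a g T).Infinite := by
  have hg := strictMono_of_le_of_lt_succ hag hga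
  refine (hT.image hg.injective.injOn).mono ?_
  rintro _ ⟨j, hj, rfl⟩
  exact ⟨j, hj, le_rfl, Or.inl (hga j)⟩

lemma compl_scaleUnion_infinite (hag : ∀ j, a j ≤ g j) (hga : ∀ j, g j < a (j + 1))
    (hT : Tᶜ.Infinite) : (scaleUnion a g T)ᶜ.Infinite := by
  have hg := strictMono_of_le_of_lt_succ hag hga
  refine (hT.image hg.injective.injOn).mono ?_
  rintro _ ⟨j, hj, rfl⟩ hjT
  exact (lt_of_mem_scaleUnion hag hga hj hjT (hg (Nat.lt_succ_self j))).not_ge (hag j)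

lemma infinite_setOf_lt_enum_compl_scaleUnion (hag : ∀ j, a j ≤ g j)
    (hga : ∀ j, g j < a (j + 1)) (hx : (scaleUnion a g T)ᶜ.Infinite) {z : ℕ → ℕ}
    (hz : {j ∈ {j | ∃ n, g j < n ∧ z n < a (j + 2)} | j ∈ T ∧ j + 1 ∈ T}.Infinite) :
    {n | z n < enum (scaleUnion a g T)ᶜ n}.Infinite := by
  have hg := strictMono_of_le_of_lt_succ hag hga
  refine infinite_of_forall_exists_gt fun N => ?_
  obtain ⟨j, ⟨⟨n, hjn, hzn⟩, hj, hj₁⟩, hNj⟩ := hz.exists_gt N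
  refine ⟨n, le_enum_of_forall_lt hx (B := g j) (fun w hw hwx => ?_) (by omega), ?_⟩
  · by_contra! hjw
    exact hwx (Ico_subset_scaleUnion hj hj₁ ⟨hjw, by omega⟩)
  · have := hg.id_le j
    simp only [id] at this
    omega

lemma le_enum_scaleUnion (hag : ∀ j, a j ≤ g j) (hga : ∀ j, g j < a (j + 1))
    (hU : (scaleUnion a g T).Infinite) (hj : j ∉ T) {M k : ℕ} (hM : M ≤ g (j + 1))
    (hk : a j < k) : M ≤ enum (scaleUnion a g T) k :=
  le_enum_of_forall_lt hU (fun _ hw hwU => lt_of_mem_scaleUnion hag hga hj hwU (by omega))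
    (by omega)

end ScaleUnion

section Scale

variable {d G : ℕ → ℕ}

/-- `scaleLow d G j` and `scaleHigh d G j` are the thresholds `a_j` and `g_j`. -/
def scaleLow (d G : ℕ → ℕ) : ℕ → ℕ
  | 0 => 0
  | j + 1 => G (d (scaleLow d G j + 1)) + 1

def scaleHigh (d G : ℕ → ℕ) (j : ℕ) : ℕ := d (scaleLow d G j + 1)

lemma scaleLow_lt_scaleHigh (hd : StrictMono d) (j : ℕ) : scaleLow d G j < scaleHigh d G j :=
  hd.id_le (scaleLow d G j + 1)

lemma scaleHigh_lt_scaleLow_succ (hG : StrictMono G) (j : ℕ) :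
    scaleHigh d G j < scaleLow d G (j + 1) :=
  Nat.lt_succ_of_le (hG.id_le _)

lemma strictMono_scaleHigh (hd : StrictMono d) (hG : StrictMono G) : StrictMono (scaleHigh d G) :=
  strictMono_nat_of_lt_succ fun j =>
    (scaleHigh_lt_scaleLow_succ hG j).trans (scaleLow_lt_scaleHigh hd (j + 1))

lemma infinite_setOf_lt_scaleLow (hd : StrictMono d) (hG : StrictMono G) {z : ℕ → ℕ}
    (hz : ∃ᶠ n in atTop, z n < G n) :
    {j | ∃ n, scaleHigh d G j < n ∧ z n < scaleLow d G (j + 2)}.Infinite := by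
  have hg := strictMono_scaleHigh hd hG
  refine infinite_of_forall_exists_gt fun J => ?_
  obtain ⟨n, hn, hzn⟩ := frequently_atTop.1 hz (scaleHigh d G (J + 1) + 1)
  obtain ⟨j, hjn, hnj⟩ := hg.exists_le_lt_succ (x := n - 1)
    (by have := hg.monotone (Nat.zero_le (J + 1)); omega)
  have hJj : J + 1 < j + 1 := hg.lt_iff_lt.1 (by omega)
  refine ⟨j, ⟨n, by omega, ?_⟩, by omega⟩
  calc z n < G n := hzn
    _ ≤ G (scaleHigh d G (j + 1)) := hG.monotone (by omega)
    _ < scaleLow d G (j + 2) := Nat.lt_succ_self _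

lemma eventually_le_max_enum_scaleUnion (hd : StrictMono d) (hG : StrictMono G) {T : Set ℕ}
    (hU : (scaleUnion (scaleLow d G) (scaleHigh d G) T).Infinite)
    (hU' : (scaleUnion (scaleLow d G) (scaleHigh d G) Tᶜ).Infinite) :
    ∀ᶠ k in atTop, d k ≤ max (enum (scaleUnion (scaleLow d G) (scaleHigh d G) T) k)
      (enum (scaleUnion (scaleLow d G) (scaleHigh d G) Tᶜ) k) := by
  have hag j := (scaleLow_lt_scaleHigh (G := G) hd j).le
  have hga := scaleHigh_lt_scaleLow_succ (d := d) hG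
  refine eventually_atTop.2 ⟨scaleHigh d G 0, fun k hk => ?_⟩
  obtain ⟨j, hjk, hkj⟩ := (strictMono_scaleHigh hd hG).exists_le_lt_succ
    (hk.trans (by simpa using hd.id_le k))
  have hjk' : scaleLow d G j < k := hd.le_iff_le.1 hjk
  by_cases hj : j ∈ T
  · exact le_max_of_le_right (le_enum_scaleUnion hag hga hU' (not_not_intro hj) hkj.le hjk')
  · exact le_max_of_le_left (le_enum_scaleUnion hag hga hU hj hkj.le hjk')

end Scale

theorem stmt10 (Z : Set (ℕ → ℕ)) (hZ : Cardinal.mk Z < min domNumber reapNumber)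
    (d : ℕ → ℕ) (hd : StrictMono d) :
    ∃ x y : Set ℕ, x.Infinite ∧ xᶜ.Infinite ∧ y.Infinite ∧ yᶜ.Infinite ∧
      (∀ z ∈ Z, {n : ℕ | z n < enum x n}.Infinite ∧ {n : ℕ | z n < enum y n}.Infinite) ∧
      ∀ᶠ k in Filter.atTop, d k ≤ max (enum xᶜ k) (enum yᶜ k) := by
  obtain ⟨hZd, hZr⟩ := lt_min_iff.1 hZ
  obtain ⟨G, hG, hGZ⟩ := exists_strictMono_frequently_lt (fun z : Z => (z : ℕ → ℕ)) hZd
  have hag j := (scaleLow_lt_scaleHigh (G := G) hd j).le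
  have hga := scaleHigh_lt_scaleLow_succ (d := d) hG
  obtain ⟨σ, hσ, hσc, hσZ⟩ := exists_pairSplitting
    (fun z : Z => {j | ∃ n, scaleHigh d G j < n ∧ z.1 n < scaleLow d G (j + 2)})
    (fun z => infinite_setOf_lt_scaleLow hd hG (hGZ z)) hZd hZr
  have hσ' : σᶜᶜ.Infinite := by rwa [compl_compl]
  have hU := scaleUnion_infinite hag hga hσ
  have hU' := scaleUnion_infinite hag hga hσc
  have hx := compl_scaleUnion_infinite hag hga hσc
  have hy := compl_scaleUnion_infinite hag hga hσ'
  refine ⟨_, _, hx, by rwa [compl_compl], hy, by rwa [compl_compl], fun z hz =>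
    ⟨infinite_setOf_lt_enum_compl_scaleUnion hag hga hx (hσZ ⟨z, hz⟩).1,
      infinite_setOf_lt_enum_compl_scaleUnion hag hga hy (hσZ ⟨z, hz⟩).2⟩, ?_⟩
  simpa only [compl_compl] using eventually_le_max_enum_scaleUnion hd hG hU hU'
end

section
/- Let h : ℕ → ℕ be strictly increasing and suppose d : ℕ → ℕ satisfies 2h(n+1) < d(h(n)) for all n. Let x be an infinite co-infinite subset of ℕ. Then for each n, it is impossible that there exist l, k ∈ [h(n), h(n+1)) with d(l) ≤ x(l) and d(k) ≤ x^c(k), where x(·), x^c(·) denote the increasing enumerations of x and its complement. -/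
theorem stmt13 (h d : ℕ → ℕ) (hh : StrictMono h) (hd : StrictMono d)
    (hgrow : ∀ n : ℕ, 2 * h (n + 1) < d (h n))
    (x : Set ℕ) (hx : x.Infinite) (hxc : xᶜ.Infinite) :
    ∀ n : ℕ, ¬ ∃ l ∈ Set.Ico (h n) (h (n + 1)), ∃ k ∈ Set.Ico (h n) (h (n + 1)),
      d l ≤ enum x l ∧ d k ≤ enum xᶜ k := by
  classical
  rintro n ⟨l, ⟨hl1, hl2⟩, k, ⟨hk1, hk2⟩, hdl, hdk⟩
  set m := h (n + 1) with hm
  have hm1 : 1 ≤ m := by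
    have := hh (Nat.succ_pos n)
    omega
  have hx' : {i | i ∈ x}.Infinite := hx
  have hxc' : {i | i ∈ xᶜ}.Infinite := hxc
  -- 2m < nth x (m-1)
  have key1 : 2 * m < Nat.nth (· ∈ x) (m - 1) := by
    calc 2 * m < d (h n) := hgrow n
    _ ≤ d l := hd.monotone hl1
    _ ≤ Nat.nth (· ∈ x) (l - 1) := hdl
    _ ≤ Nat.nth (· ∈ x) (m - 1) := (Nat.nth_le_nth hx').2 (by omega)
  have key2 : 2 * m < Nat.nth (· ∈ xᶜ) (m - 1) := by
    calc 2 * m < d (h n) := hgrow n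
    _ ≤ d k := hd.monotone hk1
    _ ≤ Nat.nth (· ∈ xᶜ) (k - 1) := hdk
    _ ≤ Nat.nth (· ∈ xᶜ) (m - 1) := (Nat.nth_le_nth hxc').2 (by omega)
  -- counting: every i ≤ 2m has count < m
  have hcx : ∀ i : ℕ, i ≤ 2 * m → i ∈ x → Nat.count (· ∈ x) i < m := by
    intro i hi hix
    have : Nat.nth (· ∈ x) (Nat.count (· ∈ x) i) < Nat.nth (· ∈ x) (m - 1) := by
      rw [Nat.nth_count hix]; omega
    have := (Nat.nth_lt_nth hx').1 this
    omega
  have hcxc : ∀ i : ℕ, i ≤ 2 * m → i ∈ xᶜ → Nat.count (· ∈ xᶜ) i < m := by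
    intro i hi hix
    have : Nat.nth (· ∈ xᶜ) (Nat.count (· ∈ xᶜ) i) < Nat.nth (· ∈ xᶜ) (m - 1) := by
      rw [Nat.nth_count hix]; omega
    have := (Nat.nth_lt_nth hxc').1 this
    omega
  -- injective map Fin (2m+1) → Bool × Fin m
  have : Fintype.card (Fin (2 * m + 1)) ≤ Fintype.card (Bool × Fin m) := by
    apply Fintype.card_le_of_injective
      (fun i : Fin (2 * m + 1) => if hi : (i : ℕ) ∈ x then ((true, ⟨Nat.count (· ∈ x) i,
          hcx i (by omega) hi⟩) : Bool × Fin m)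
        else (false, ⟨Nat.count (· ∈ xᶜ) i, hcxc i (by omega) hi⟩))
    intro i j hij
    by_cases hi : (i : ℕ) ∈ x <;> by_cases hj : (j : ℕ) ∈ x <;>
      simp [hi, hj] at hij
    · have := congrArg (Nat.nth (· ∈ x)) hij
      rw [Nat.nth_count hi, Nat.nth_count hj] at this
      exact Fin.ext this
    · have hi' : (i : ℕ) ∈ xᶜ := hi
      have hj' : (j : ℕ) ∈ xᶜ := hj
      have hij' : Nat.count (· ∈ xᶜ) (i : ℕ) = Nat.count (· ∈ xᶜ) (j : ℕ) := hij
      have := congrArg (Nat.nth (· ∈ xᶜ)) hij'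
      rw [Nat.nth_count hi', Nat.nth_count hj'] at this
      exact Fin.ext this
  simp [Fintype.card_prod] at this
end
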